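/- In a differential calculus with duality with volume form η (so PD(f) = ι_f(η) is an isomorphism, Bη = 0), for all homogeneous f, g ∈ H^•: ι_{\{f,g\}}(η) = (-1)^{|f|+1}( B ι_{f∪g}(η) - ι_{Δf ∪ g}(η) - (-1)^{|f|} ι_{f ∪ Δg}(η) ), where Δ := PD⁻¹ ∘ B ∘ PD. Equivalently, the Gerstenhaber bracket is generated by Δ under Poincaré duality. -/

import Mathlib

/-- Sign operator: `eps n x = (-1)^n • x`. -/
noncomputable def eps {V : Type*} [AddCommGroup V] (n : ℤ) (x : V) : V :=
  ((-1 : ℤ) ^ n.natAbs) • x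

/-- A differential calculus with duality (Tamarkin-Tsygan, Lambre): a Gerstenhaber
algebra `(H^•, ∪, {-,-})`, a graded module `H_•` via the cap product with
contraction `ι_f = f ∩ -`, an operator `B` with `B² = 0` satisfying the Cartan
compatibilities, and a volume form `η ∈ H_n` with `η ∩ 1 = η`, `Bη = 0`, such that
`PD(f) := f ∩ η` is an isomorphism `H^i ≅ H_{n-i}` (with inverse `PDinv`). -/
structure DCD (Hc Hh : Type*) [AddCommGroup Hc] [AddCommGroup Hh] where
  homc : ℤ → Hc → Prop
  homh : ℤ → Hh → Prop
  cup : Hc → Hc → Hc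
  one : Hc
  gb : Hc → Hc → Hc
  cap : Hc → Hh → Hh
  B : Hh → Hh
  n : ℤ
  vol : Hh
  cup_addl : ∀ a b c, cup (a + b) c = cup a c + cup b c
  cup_addr : ∀ a b c, cup a (b + c) = cup a b + cup a c
  cup_assoc : ∀ a b c, cup (cup a b) c = cup a (cup b c)
  cup_one : ∀ a, cup one a = a
  one_cup : ∀ a, cup a one = a
  one_homog : homc 0 one
  cup_homog : ∀ p q a b, homc p a → homc q b → homc (p + q) (cup a b)
  cup_comm : ∀ p q a b, homc p a → homc q b → cup a b = eps (p * q) (cup b a)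
  gb_homog : ∀ p q a b, homc p a → homc q b → homc (p + q - 1) (gb a b)
  gb_skew : ∀ p q a b, homc p a → homc q b →
    gb a b = - eps ((p + 1) * (q + 1)) (gb b a)
  gb_leibniz : ∀ p q r a b c, homc p a → homc q b → homc r c →
    gb a (cup b c) = cup (gb a b) c + eps ((p + 1) * q) (cup b (gb a c))
  cap_addl : ∀ a b α, cap (a + b) α = cap a α + cap b α
  cap_addr : ∀ a α β, cap a (α + β) = cap a α + cap a β
  cap_cup : ∀ a b α, cap (cup a b) α = cap a (cap b α)
  cap_one : ∀ α, cap one α = α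
  cap_homog : ∀ p q a α, homc p a → homh q α → homh (q - p) (cap a α)
  B_add : ∀ α β, B (α + β) = B α + B β
  B_homog : ∀ q α, homh q α → homh (q + 1) (B α)
  B_sq : ∀ α, B (B α) = 0
  lie_lie : ∀ p q a b α, homc p a → homc q b →
    (B (cap a (B (cap b α) - eps q (cap b (B α))))
        - eps p (cap a (B (B (cap b α) - eps q (cap b (B α))))))
      - eps ((p + 1) * (q + 1))
        (B (cap b (B (cap a α) - eps p (cap a (B α))))
          - eps q (cap b (B (B (cap a α) - eps p (cap a (B α))))))
    = B (cap (gb a b) α) - eps (p + q - 1) (cap (gb a b) (B α))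
  compat : ∀ p q a b α, homc p a → homc q b →
    eps (p + 1) (cap (gb a b) α)
      = (B (cap a (cap b α)) - eps p (cap a (B (cap b α))))
        - eps (q * (p + 1)) (cap b (B (cap a α) - eps p (cap a (B α))))
  vol_homog : homh n vol
  vol_cap_one : cap one vol = vol
  B_vol : B vol = 0
  PDinv : Hh → Hc
  pd_left : ∀ f, PDinv (cap f vol) = f
  pd_right : ∀ α, cap (PDinv α) vol = α
  PDinv_homog : ∀ q α, homh q α → homc (n - q) (PDinv α)

/-- The BV operator `Δ = PD⁻¹ ∘ B ∘ PD` of a differential calculus with duality. -/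
noncomputable def DCD.Δ {Hc Hh : Type*} [AddCommGroup Hc] [AddCommGroup Hh]
    (D : DCD Hc Hh) (f : Hc) : Hc :=
  D.PDinv (D.B (D.cap f D.vol))

/-! The Cartan compatibility `(-1)^{|f|+1} ι_{{f,g}} = [L_f, ι_g]` evaluated on `η` loses its
last term because `Bη = 0`. The remaining terms are rewritten through `PD(Δ f) = B PD(f)`,
using graded commutativity to move `Δ f` (of degree `|f| - 1`) past `g`; the resulting sign
`(-1)^{(|f|-1)|g|}` agrees with the `(-1)^{|g|(|f|+1)}` of the Cartan formula. -/

section eps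

variable {V : Type*} [AddCommGroup V]

lemma eps_eps (m : ℤ) (x : V) : eps m (eps m x) = x := by
  unfold eps
  rw [smul_smul, ← pow_add, Even.neg_one_pow ⟨m.natAbs, rfl⟩, one_smul]

lemma eps_zero_right (m : ℤ) : eps m (0 : V) = 0 := smul_zero _

lemma eps_congr_of_even_iff {m m' : ℤ} (h : Even m ↔ Even m') (x : V) :
    eps m x = eps m' x := by
  unfold eps
  have h_abs : Even m.natAbs ↔ Even m'.natAbs := by
    rw [Int.natAbs_even, Int.natAbs_even]; exact h
  rcases Nat.even_or_odd m.natAbs with he | ho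
  · rw [he.neg_one_pow, (h_abs.mp he).neg_one_pow]
  · rw [ho.neg_one_pow, Odd.neg_one_pow
      (by rwa [← Nat.not_even_iff_odd, ← h_abs, Nat.not_even_iff_odd])]

lemma map_eps {W : Type*} [AddCommGroup W] (h : V →+ W) (m : ℤ) (x : V) :
    h (eps m x) = eps m (h x) :=
  h.map_zsmul _ x

end eps

namespace DCD

variable {Hc Hh : Type*} [AddCommGroup Hc] [AddCommGroup Hh] (D : DCD Hc Hh)

def pd : Hc →+ Hh :=
  AddMonoidHom.mk' (fun a => D.cap a D.vol) (fun a b => D.cap_addl a b D.vol)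

lemma pd_apply (a : Hc) : D.pd a = D.cap a D.vol := rfl

lemma cap_zero (a : Hc) : D.cap a 0 = 0 :=
  (AddMonoidHom.mk' (D.cap a) (D.cap_addr a)).map_zero

lemma cap_Δ_vol (f : Hc) : D.cap (D.Δ f) D.vol = D.B (D.cap f D.vol) :=
  D.pd_right _

lemma homc_Δ {p : ℤ} {f : Hc} (hf : D.homc p f) : D.homc (p - 1) (D.Δ f) := by
  have h := D.PDinv_homog _ _ (D.B_homog _ _ (D.cap_homog p D.n f D.vol hf D.vol_homog))
  rwa [show D.n - (D.n - p + 1) = p - 1 by ring] at h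

lemma compat_vol {p q : ℤ} {f g : Hc} (hf : D.homc p f) (hg : D.homc q g) :
    eps (p + 1) (D.cap (D.gb f g) D.vol)
      = (D.B (D.cap f (D.cap g D.vol)) - eps p (D.cap f (D.B (D.cap g D.vol))))
        - eps (q * (p + 1)) (D.cap g (D.B (D.cap f D.vol))) := by
  simpa only [D.B_vol, cap_zero, eps_zero_right, sub_zero] using D.compat p q f g D.vol hf hg

lemma cap_cup_Δ_left_vol {p q : ℤ} {f g : Hc} (hf : D.homc p f) (hg : D.homc q g) :
    D.cap (D.cup (D.Δ f) g) D.vol = eps (q * (p + 1)) (D.cap g (D.B (D.cap f D.vol))) := by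
  rw [D.cup_comm (p - 1) q (D.Δ f) g (D.homc_Δ hf) hg, ← pd_apply, map_eps, pd_apply,
    D.cap_cup, cap_Δ_vol]
  apply eps_congr_of_even_iff
  simp only [Int.even_mul, Int.even_sub, Int.even_add]
  tauto

lemma cap_cup_Δ_right_vol (f g : Hc) :
    D.cap (D.cup f (D.Δ g)) D.vol = D.cap f (D.B (D.cap g D.vol)) := by
  rw [D.cap_cup, cap_Δ_vol]

end DCD

theorem gerstenhaber_generated_by_Delta_general {Hc Hh : Type*}
    [AddCommGroup Hc] [AddCommGroup Hh]
    (D : DCD Hc Hh) :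
    ∀ p q f g, D.homc p f → D.homc q g →
      D.cap (D.gb f g) D.vol
        = eps (p + 1)
            (D.B (D.cap (D.cup f g) D.vol)
              - D.cap (D.cup (D.Δ f) g) D.vol
              - eps p (D.cap (D.cup f (D.Δ g)) D.vol)) := by
  intro p q f g hf hg
  rw [← eps_eps (p + 1) (D.cap (D.gb f g) D.vol), D.compat_vol hf hg, D.cap_cup,
    D.cap_cup_Δ_left_vol hf hg, D.cap_cup_Δ_right_vol, sub_right_comm]

/-- In a differential calculus with duality with volume form `η`, for all
homogeneous `f, g ∈ H^•`,
`ι_{{f,g}}(η) = (-1)^{|f|+1}( B ι_{f∪g}(η) - ι_{Δf ∪ g}(η) - (-1)^{|f|} ι_{f ∪ Δg}(η) )`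
where `Δ = PD⁻¹ ∘ B ∘ PD`; i.e. the Gerstenhaber bracket is generated by `Δ` under
Poincaré duality. -/
theorem gerstenhaber_generated_by_Delta {k Hc Hh : Type*} [Field k] [CharZero k]
    [AddCommGroup Hc] [AddCommGroup Hh] [Module k Hc] [Module k Hh]
    (D : DCD Hc Hh) :
    ∀ p q f g, D.homc p f → D.homc q g →
      D.cap (D.gb f g) D.vol
        = eps (p + 1)
            (D.B (D.cap (D.cup f g) D.vol)
              - D.cap (D.cup (D.Δ f) g) D.vol
              - eps p (D.cap (D.cup f (D.Δ g)) D.vol)) :=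
  gerstenhaber_generated_by_Delta_general D
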